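/- Existence of Periodic Infinite Schedules (EPIS, Theorem 4): if there exists a delay function d satisfying the finite delay property such that flooding under d does not terminate (for every round t some node v has M(t,v) = 1), then there exists a delay function d' satisfying the finite delay property which is eventually periodic and whose induced schedule is periodic infinite: there exist c ∈ ℕ and l ≥ 1 with σ_{d'}(j) = σ_{d'}(j+l) for every j ≥ c and r_{d'}(c+k) ≠ ∅ for some k ∈ {0,…,l−1}. -/
import Mathlib


open scoped Classical

/-- The state of a node in the RDAF protocol: message possession `hasMsg`,
source set `src` and destination set `dst`. -/
structure RDAFState (V : Type*) where
  hasMsg : Prop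
  src : Set V
  dst : Set V

namespace RDAF

variable {V : Type*}

/-- Initial configuration: the source has the message and destination set `N(g0)`. -/
noncomputable def init (G : SimpleGraph V) (g0 : V) : V → RDAFState V := fun u =>
  if u = g0 then ⟨True, ∅, G.neighborSet g0⟩ else ⟨False, ∅, ∅⟩

/-- One round of state evolution: from the states at round `j` to the states at round `j+1`,
under delay function `d` (where `d j v e = true` means transmission from `v` along `e` is
blocked in round `j`). -/
noncomputable def step (G : SimpleGraph V) (d : ℕ → V → Sym2 V → Bool) (j : ℕ)
    (st : V → RDAFState V) : V → RDAFState V := fun u =>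
  let s' : Set V :=
    {v | G.Adj v u ∧ (st v).hasMsg ∧ u ∈ (st v).dst ∧ d (j + 1) v s(v, u) = false}
  let t' : Set V :=
    if s'.Nonempty then G.neighborSet u \ s'
    else if (st u).hasMsg then {v | v ∈ (st u).dst ∧ d (j + 1) u s(u, v) = true}
    else ∅
  ⟨s'.Nonempty ∨ t'.Nonempty, s', t'⟩

/-- The state `S(j, u)` of every node `u` at round `j`. -/
noncomputable def stateAt (G : SimpleGraph V) (g0 : V) (d : ℕ → V → Sym2 V → Bool) :
    ℕ → V → RDAFState V
  | 0 => init G g0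
  | j + 1 => step G d j (stateAt G g0 d j)

/-- `M j u`: node `u` possesses the message at round `j`. -/
noncomputable def M (G : SimpleGraph V) (g0 : V) (d : ℕ → V → Sym2 V → Bool) (j : ℕ)
    (u : V) : Prop :=
  (stateAt G g0 d j u).hasMsg

/-- `srcSet j u = s(j, u)`: the source set of node `u` at round `j`. -/
noncomputable def srcSet (G : SimpleGraph V) (g0 : V) (d : ℕ → V → Sym2 V → Bool) (j : ℕ)
    (u : V) : Set V :=
  (stateAt G g0 d j u).src

/-- `destSet j u = dest(j, u)`: the destination set of node `u` at round `j`. -/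
noncomputable def destSet (G : SimpleGraph V) (g0 : V) (d : ℕ → V → Sym2 V → Bool) (j : ℕ)
    (u : V) : Set V :=
  (stateAt G g0 d j u).dst

/-- The transmission set `r(j)`: pairs `(v, {v,w})` such that `v` transmits to `w` in round `j`. -/
noncomputable def trans (G : SimpleGraph V) (g0 : V) (d : ℕ → V → Sym2 V → Bool) :
    ℕ → Set (V × Sym2 V)
  | 0 => ∅
  | j + 1 =>
    {p | ∃ v w : V, p = (v, s(v, w)) ∧ G.Adj v w ∧ M G g0 d j v ∧
      w ∈ destSet G g0 d j v ∧ d (j + 1) v s(v, w) = false}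

/-- The configuration `σ(j) = (S(j, ·), r(j))` at round `j`. -/
noncomputable def config (G : SimpleGraph V) (g0 : V) (d : ℕ → V → Sym2 V → Bool) (j : ℕ) :
    (V → RDAFState V) × Set (V × Sym2 V) :=
  (stateAt G g0 d j, trans G g0 d j)

/-- The finite delay property: every node-edge pair is allowed to transmit infinitely often. -/
def FiniteDelay (G : SimpleGraph V) (d : ℕ → V → Sym2 V → Bool) : Prop :=
  ∀ v : V, ∀ e ∈ G.edgeSet, v ∈ e → ∀ j : ℕ, ∃ j' ≥ j, d j' v e = false

/-- Flooding has terminated by round `t`: no node has the message at round `t`. -/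
def TerminatedBy (G : SimpleGraph V) (g0 : V) (d : ℕ → V → Sym2 V → Bool) (t : ℕ) : Prop :=
  ∀ v : V, ¬ M G g0 d t v

/-- Flooding terminates: it has terminated by some round. -/
def Terminates (G : SimpleGraph V) (g0 : V) (d : ℕ → V → Sym2 V → Bool) : Prop :=
  ∃ t : ℕ, TerminatedBy G g0 d t

/-- A schedule is periodic infinite with parameters `(c, l)`. -/
def PeriodicInfinite (G : SimpleGraph V) (g0 : V) (d : ℕ → V → Sym2 V → Bool)
    (c l : ℕ) : Prop :=
  1 ≤ l ∧ (∀ j : ℕ, c ≤ j → config G g0 d j = config G g0 d (j + l)) ∧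
    ∃ k < l, (trans G g0 d (c + k)).Nonempty


section EPISAux

set_option linter.dupNamespace false

variable {V : Type*} (G : SimpleGraph V) (g0 : V) (d : ℕ → V → Sym2 V → Bool)

instance instFiniteState {V : Type*} [Finite V] : Finite (RDAFState V) :=
  Finite.of_injective (fun s => (s.hasMsg, s.src, s.dst)) (by rintro ⟨⟩ ⟨⟩ h; simpa using h)

lemma stateAt_succ (j : ℕ) :
    stateAt G g0 d (j+1) = step G d j (stateAt G g0 d j) := rfl

lemma srcSet_succ (j : ℕ) (u : V) : srcSet G g0 d (j+1) u =
    {v | G.Adj v u ∧ M G g0 d j v ∧ u ∈ destSet G g0 d j v ∧ d (j+1) v s(v,u) = false} := rfl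

lemma destSet_succ (j : ℕ) (u : V) : destSet G g0 d (j+1) u =
    if (srcSet G g0 d (j+1) u).Nonempty then G.neighborSet u \ srcSet G g0 d (j+1) u
    else if M G g0 d j u then {v | v ∈ destSet G g0 d j u ∧ d (j+1) u s(u,v) = true}
    else ∅ := rfl

lemma M_succ (j : ℕ) (u : V) : M G g0 d (j+1) u ↔
    (srcSet G g0 d (j+1) u).Nonempty ∨ (destSet G g0 d (j+1) u).Nonempty := Iff.rfl

lemma trans_succ (j : ℕ) : trans G g0 d (j+1) =
    {p | ∃ v w : V, p = (v, s(v, w)) ∧ G.Adj v w ∧ M G g0 d j v ∧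
      w ∈ destSet G g0 d j v ∧ d (j + 1) v s(v, w) = false} := rfl

lemma step_congr (d₁ d₂ : ℕ → V → Sym2 V → Bool) (j k : ℕ) (st : V → RDAFState V)
    (h : d₁ (j+1) = d₂ (k+1)) : step G d₁ j st = step G d₂ k st := by
  unfold step; rw [h]

lemma destSet_subset_neighborSet (j : ℕ) (u : V) :
    destSet G g0 d j u ⊆ G.neighborSet u := by
  induction j generalizing u with
  | zero =>
    by_cases hu : u = g0 <;> simp [destSet, stateAt, init, hu]
  | succ j ih =>
    rw [destSet_succ]
    split_ifs with h1 h2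
    · exact Set.diff_subset
    · exact fun v hv => ih u hv.1
    · exact Set.empty_subset _

/-- If the schedule never terminates and the delay function has the finite delay
property, then transmissions happen at arbitrarily large rounds. -/
lemma exists_trans_nonempty [Fintype V] (hfd : FiniteDelay G d)
    (hnt : ∀ t : ℕ, ∃ u : V, M G g0 d t u) (J : ℕ) :
    ∃ j, J ≤ j ∧ (trans G g0 d j).Nonempty := by
  by_contra hc
  push_neg at hc
  have he : ∀ j, J ≤ j → trans G g0 d j = ∅ := hc
  -- source sets are empty after round J
  have hsrc : ∀ j, J ≤ j → ∀ u : V, srcSet G g0 d (j+1) u = ∅ := by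
    intro j hj u
    rw [Set.eq_empty_iff_forall_notMem]
    intro v hv
    rw [srcSet_succ] at hv
    obtain ⟨hadj, hM, hdst, hd⟩ := hv
    have : (v, s(v,u)) ∈ trans G g0 d (j+1) := by
      rw [trans_succ]; exact ⟨v, u, rfl, hadj, hM, hdst, hd⟩
    rw [he (j+1) (le_trans hj (Nat.le_succ j))] at this
    exact this
  -- destination sets shrink, and message possession propagates downward
  have hkey : ∀ j, J ≤ j → ∀ u : V,
      destSet G g0 d (j+1) u ⊆ destSet G g0 d j u ∧
      (M G g0 d (j+1) u → M G g0 d j u ∧ (destSet G g0 d (j+1) u).Nonempty) := by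
    intro j hj u
    have hs : ¬ (srcSet G g0 d (j+1) u).Nonempty := by
      rw [hsrc j hj u]; exact Set.not_nonempty_empty
    have hdst : destSet G g0 d (j+1) u =
        if M G g0 d j u then {v | v ∈ destSet G g0 d j u ∧ d (j+1) u s(u,v) = true}
        else ∅ := by rw [destSet_succ, if_neg hs]
    constructor
    · rw [hdst]; split_ifs
      · exact fun v hv => hv.1
      · exact Set.empty_subset _
    · intro hM
      rw [M_succ] at hM
      have hne : (destSet G g0 d (j+1) u).Nonempty := hM.resolve_left hs
      refine ⟨?_, hne⟩
      by_contra hMu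
      rw [hdst, if_neg hMu] at hne
      exact Set.not_nonempty_empty hne
  have hmono : ∀ u : V, ∀ j j', J ≤ j → j ≤ j' →
      destSet G g0 d j' u ⊆ destSet G g0 d j u := by
    intro u j j' hj h
    induction h with
    | refl => exact subset_rfl
    | @step m hm ih => exact Set.Subset.trans ((hkey m (le_trans hj hm) u).1) ih
  have hMdown : ∀ u : V, ∀ k j, J ≤ j → M G g0 d (j + k + 1) u → M G g0 d (j+1) u := by
    intro u k
    induction k with
    | zero => intro j hj hM; exact hM
    | succ k ih =>
      intro j hj hM
      have : M G g0 d ((j + k + 1) + 1) u := hM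
      exact ih j hj ((hkey (j + k + 1) (by omega) u).2 this).1
  -- pigeonhole: some node has the message at all rounds after J
  have hpick : ∀ t : ℕ, ∃ u : V, M G g0 d (t + J + 1) u := fun t => hnt (t + J + 1)
  choose f hf using hpick
  obtain ⟨u, hu⟩ := Finite.exists_infinite_fiber f
  have huinf : (f ⁻¹' {u}).Infinite := Set.infinite_coe_iff.mp hu
  have hMall : ∀ j, J ≤ j → M G g0 d (j+1) u := by
    intro j hj
    obtain ⟨t, htmem, htge⟩ := huinf.exists_gt j
    have hMt : M G g0 d (t + J + 1) u := by
      have : f t = u := htmem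
      rw [← this]; exact hf t
    have : M G g0 d (j + (t + J - j) + 1) u := by convert hMt using 2; omega
    exact hMdown u (t + J - j) j hj this
  -- pigeonhole: some node stays in the destination set of u forever
  have hdne : ∀ t : ℕ, (destSet G g0 d (t + J + 1) u).Nonempty := by
    intro t
    exact ((hkey (t + J) (by omega) u).2 (hMall (t + J) (by omega))).2
  choose g hg using hdne
  obtain ⟨v, hv⟩ := Finite.exists_infinite_fiber g
  have hvinf : (g ⁻¹' {v}).Infinite := Set.infinite_coe_iff.mp hv
  have hvall : ∀ j, J ≤ j → v ∈ destSet G g0 d (j+1) u := by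
    intro j hj
    obtain ⟨t, htmem, htge⟩ := hvinf.exists_gt j
    have hvt : v ∈ destSet G g0 d (t + J + 1) u := by
      have : g t = v := htmem
      rw [← this]; exact hg t
    exact hmono u (j+1) (t + J + 1) (by omega) (by omega) hvt
  -- finite delay gives a transmission, contradiction
  have hadj : G.Adj u v := (destSet_subset_neighborSet G g0 d (J+1) u) (hvall J le_rfl)
  have hedge : s(u,v) ∈ G.edgeSet := hadj
  obtain ⟨j', hj'ge, hd0⟩ := hfd u s(u,v) hedge (Sym2.mem_mk_left u v) (J+2)
  obtain ⟨k, rfl⟩ : ∃ k, j' = (k + 1) + 1 := ⟨j' - 2, by omega⟩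
  have hk : J ≤ k := by omega
  have : (u, s(u,v)) ∈ trans G g0 d (k + 1 + 1) := by
    rw [trans_succ]
    exact ⟨u, v, rfl, hadj, hMall k hk, hvall k hk, hd0⟩
  rw [he (k+1+1) (by omega)] at this
  exact this

/-- Good windows: beyond any round `m` there is a round `k` such that the interval
`(m, k]` contains a transmission and an unblocked round for every node-edge pair. -/
lemma exists_good_window [Fintype V] (hfd : FiniteDelay G d)
    (hnt : ∀ t : ℕ, ∃ u : V, M G g0 d t u) (m : ℕ) :
    ∃ k, m < k ∧ (∃ j, m < j ∧ j ≤ k ∧ (trans G g0 d j).Nonempty) ∧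
      ∀ v : V, ∀ e ∈ G.edgeSet, v ∈ e → ∃ i, m < i ∧ i ≤ k ∧ d i v e = false := by
  obtain ⟨j0, hj0, hne⟩ := exists_trans_nonempty G g0 d hfd hnt (m+1)
  have hF : ∀ p : V × Sym2 V, ∃ i, (p.2 ∈ G.edgeSet → p.1 ∈ p.2 →
      (m < i ∧ d i p.1 p.2 = false)) := by
    intro p
    by_cases hp : p.2 ∈ G.edgeSet ∧ p.1 ∈ p.2
    · obtain ⟨i, hi, hdi⟩ := hfd p.1 p.2 hp.1 hp.2 (m+1)
      exact ⟨i, fun _ _ => ⟨by omega, hdi⟩⟩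
    · exact ⟨0, fun h1 h2 => absurd ⟨h1, h2⟩ hp⟩
  choose F hFspec using hF
  obtain ⟨K, hK⟩ := Set.Finite.bddAbove (Set.finite_range F)
  refine ⟨max j0 K, by omega, ⟨j0, by omega, le_max_left _ _, hne⟩, ?_⟩
  intro v e he hv
  have hFK : F (v, e) ≤ K := hK (Set.mem_range_self (v, e))
  obtain ⟨h1, h2⟩ := hFspec (v, e) he hv
  exact ⟨F (v, e), h1, le_trans hFK (le_max_right _ _), h2⟩

end EPISAux

end RDAF

/-- **Existence of Periodic Infinite Schedules (EPIS, Theorem 4).** If some delay function with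
the finite delay property induces a non-terminating schedule, then some delay function with the
finite delay property is eventually periodic and induces a periodic infinite schedule. -/
theorem RDAF.existence_of_periodic_infinite_schedules
    {V : Type*} [Fintype V] (G : SimpleGraph V) (g0 : V)
    (h : ∃ d : ℕ → V → Sym2 V → Bool, RDAF.FiniteDelay G d ∧
      ∀ t : ℕ, ∃ u : V, RDAF.M G g0 d t u) :
    ∃ d' : ℕ → V → Sym2 V → Bool, RDAF.FiniteDelay G d' ∧
      (∃ c p : ℕ, 1 ≤ p ∧
        ∀ i : ℕ, c ≤ i → ∀ u : V, ∀ e ∈ G.edgeSet, u ∈ e → d' i u e = d' (i + p) u e) ∧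
      ∃ c l : ℕ, RDAF.PeriodicInfinite G g0 d' c l := by
  classical
  obtain ⟨d, hfd, hnt⟩ := h
  -- build the increasing sequence of good windows
  choose next hnext_lt hnext_tr hnext_ub using
    RDAF.exists_good_window G g0 d hfd hnt
  set φ : ℕ → ℕ := fun n => next^[n] 0 with hφ
  have hφsucc : ∀ n, φ (n+1) = next (φ n) := fun n =>
    Function.iterate_succ_apply' next n 0
  have hφmono : StrictMono φ := strictMono_nat_of_lt_succ (fun n => by
    rw [hφsucc]; exact hnext_lt (φ n))
  -- pigeonhole on configurations at window boundaries
  obtain ⟨n₁, n₂, hne, heq⟩ :=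
    Finite.exists_ne_map_eq_of_infinite (fun n => RDAF.stateAt G g0 d (φ n))
  wlog hlt : n₁ < n₂ generalizing n₁ n₂
  · exact this n₂ n₁ hne.symm heq.symm (by omega)
  set a : ℕ := φ n₁ with ha
  set b : ℕ := φ n₂ with hb
  have hab : a < b := hφmono hlt
  have hstate : RDAF.stateAt G g0 d a = RDAF.stateAt G g0 d b := heq
  set l : ℕ := b - a with hl
  have hl1 : 1 ≤ l := by omega
  have hwin : φ (n₁ + 1) ≤ b := by
    exact hφmono.le_iff_le.mpr hlt
  -- the transmission round and the unblocking rounds inside the window (a, b]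
  obtain ⟨j₀, hj₀a, hj₀b, hj₀ne⟩ := hnext_tr a
  have hj₀b' : j₀ ≤ b := le_trans (by rw [hφsucc]; exact hj₀b) hwin
  have hub : ∀ v : V, ∀ e ∈ G.edgeSet, v ∈ e →
      ∃ i, a < i ∧ i ≤ b ∧ d i v e = false := by
    intro v e he hv
    obtain ⟨i, hi1, hi2, hi3⟩ := hnext_ub a v e he hv
    exact ⟨i, hi1, le_trans (le_trans hi2 (le_of_eq (hφsucc n₁).symm)) hwin, hi3⟩
  -- the round-reduction map and the periodic delay function
  set r : ℕ → ℕ := fun j => if j ≤ b then j else a + 1 + ((j - (a+1)) % l) with hr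
  set d' : ℕ → V → Sym2 V → Bool := fun i => d (r i) with hd'
  have hr0 : r 0 = 0 := by simp [hr]
  have hrid : ∀ j, j ≤ b → r j = j := by intro j hj; simp [hr, hj]
  have hrsucc : ∀ j : ℕ, (r j < b ∧ r (j+1) = r j + 1) ∨ (r j = b ∧ r (j+1) = a + 1) := by
    intro j
    by_cases hj : j + 1 ≤ b
    · left
      rw [hrid j (by omega), hrid (j+1) hj]
      omega
    · push_neg at hj
      have hrj1 : r (j+1) = a + 1 + ((j - a) % l) := by
        have : ¬ (j + 1 ≤ b) := by omega
        simp only [hr, if_neg this]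
        have h2 : j + 1 - (a+1) = j - a := by omega
        rw [h2]
      rcases Nat.eq_or_lt_of_le (by omega : b ≤ j) with hjb | hjb
      · right
        rw [hrid j (by omega)]
        refine ⟨hjb.symm, ?_⟩
        rw [hrj1, ← hjb]
        have : b - a = l := by omega
        rw [this, Nat.mod_self]
      · have hrj : r j = a + 1 + ((j - (a+1)) % l) := by
          have : ¬ (j ≤ b) := by omega
          simp only [hr, if_neg this]
        set x : ℕ := j - (a + 1) with hx
        have hxj : j - a = x + 1 := by omega
        have hxlt : x % l < l := Nat.mod_lt x (by omega)
        by_cases hcase : x % l + 1 = l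
        · right
          constructor
          · rw [hrj]; omega
          · rw [hrj1, hxj]
            have hx1 : x + 1 = l * (x / l + 1) := by
              have h1 := Nat.div_add_mod x l
              have h2 : l * (x / l + 1) = l * (x / l) + l := by ring
              omega
            rw [hx1, Nat.mul_mod_right]
        · left
          have hmod : (x + 1) % l = x % l + 1 := by
            conv_lhs => rw [show x + 1 = l * (x / l) + (x % l + 1) from by
              have h1 := Nat.div_add_mod x l; omega]
            rw [Nat.mul_add_mod]
            exact Nat.mod_eq_of_lt (by omega)
          constructor
          · rw [hrj]; omega
          · rw [hrj1, hrj, hxj, hmod]; omega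
  have hrper : ∀ j, a + 1 ≤ j → r (j + l) = r j := by
    intro j hj
    have h1 : ¬ (j + l ≤ b) := by omega
    have h2 : j + l - (a+1) = (j - (a+1)) + l := by omega
    have h3 : r (j + l) = a + 1 + ((j - (a+1)) % l) := by
      simp only [hr, if_neg h1]
      rw [h2, Nat.add_mod_right]
    by_cases hjb : j ≤ b
    · rw [h3, hrid j hjb, Nat.mod_eq_of_lt (by omega)]
      omega
    · rw [h3]
      simp only [hr, if_neg hjb]
  -- simulation: the schedule of d' is the schedule of d reparametrised by r
  have hsim : ∀ j, RDAF.stateAt G g0 d' j = RDAF.stateAt G g0 d (r j) := by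
    intro j
    induction j with
    | zero => rw [hr0]; rfl
    | succ j ih =>
      rcases hrsucc j with ⟨hlt', hreq⟩ | ⟨hbeq, hreq⟩
      · rw [RDAF.stateAt_succ, ih,
          RDAF.step_congr G d' d j (r j) _
            (by show d (r (j+1)) = d (r j + 1); rw [hreq]),
          ← RDAF.stateAt_succ, ← hreq]
      · rw [RDAF.stateAt_succ, ih, hbeq, ← hstate,
          RDAF.step_congr G d' d j a _
            (by show d (r (j+1)) = d (a + 1); rw [hreq]),
          ← RDAF.stateAt_succ, hreq]
  have htrans : ∀ j, RDAF.trans G g0 d' j = RDAF.trans G g0 d (r j) := by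
    intro j
    cases j with
    | zero => rw [hr0]; rfl
    | succ j =>
      rcases hrsucc j with ⟨hlt', hreq⟩ | ⟨hbeq, hreq⟩
      · rw [hreq, RDAF.trans_succ, RDAF.trans_succ]
        simp only [RDAF.M, RDAF.destSet, hsim j]
        have : d' (j+1) = d (r j + 1) := by show d (r (j+1)) = _; rw [hreq]
        rw [this]
      · rw [hreq, RDAF.trans_succ, RDAF.trans_succ]
        simp only [RDAF.M, RDAF.destSet, hsim j, hbeq, ← hstate]
        have : d' (j+1) = d (a + 1) := by show d (r (j+1)) = _; rw [hreq]
        rw [this]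
  have hconfig : ∀ j, RDAF.config G g0 d' j = RDAF.config G g0 d (r j) := by
    intro j
    simp only [RDAF.config, hsim j, htrans j]
  -- r is constant on translates by multiples of l above a
  have hrnl : ∀ i, a + 1 ≤ i → i ≤ b → ∀ n : ℕ, r (i + n * l) = i := by
    intro i hi1 hi2 n
    induction n with
    | zero => simpa using hrid i hi2
    | succ n ih =>
      have : i + (n+1) * l = (i + n * l) + l := by ring
      rw [this, hrper (i + n * l) (by omega), ih]
  refine ⟨d', ?_, ⟨a + 1, l, hl1, ?_⟩, a + 1, l, hl1, ?_, ?_⟩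
  · -- finite delay property of d'
    intro v e he hv j
    obtain ⟨i, hi1, hi2, hi3⟩ := hub v e he hv
    refine ⟨i + j * l, ?_, ?_⟩
    · have : j ≤ j * l := Nat.le_mul_of_pos_right j (by omega)
      omega
    · show d (r (i + j * l)) v e = false
      rw [hrnl i (by omega) hi2 j]
      exact hi3
  · -- eventual periodicity of d'
    intro i hi u e _ _
    show d (r i) u e = d (r (i + l)) u e
    rw [hrper i hi]
  · -- periodicity of the configuration
    intro j hj
    rw [hconfig j, hconfig (j + l), hrper j hj]
  · -- a transmission occurs within the period
    refine ⟨j₀ - (a + 1), by omega, ?_⟩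
    have hck : a + 1 + (j₀ - (a + 1)) = j₀ := by omega
    rw [hck, htrans j₀, hrid j₀ hj₀b']
    exact hj₀ne
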